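/- Let U, V : ℝ → ℝ³ be smooth curves and W : ℝ → ℝ³ smooth, such that {U(t), V(t), W(t)} is orthonormal for all t, and suppose U'(0) = −b·V(0), V'(0) = −a·W(0) + b·U(0), W'(0) = a·V(0) for real numbers a, b. Let φ : ℝ → ℝ be smooth with φ(0) = 0, φ'(0) = b, and φ''(0) = ⟨V''(0), U(0)⟩. Define Ũ(t) = cos(φ(t))·U(t) + sin(φ(t))·V(t) and Ṽ(t) = −sin(φ(t))·U(t) + cos(φ(t))·V(t). Then Ũ'(0) = 0, Ṽ'(0) = −a·W(0), ⟨Ũ''(0), V(0)⟩ = 0, and ⟨Ṽ''(0), U(0)⟩ = 0. -/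

import Mathlib

open scoped RealInnerProductSpace
open Real

/-- The gauge-rotation (frame improvement) argument from the proof of
Proposition three. -/
theorem stmt_14 (U V W : ℝ → EuclideanSpace ℝ (Fin 3)) (a b : ℝ)
    (hU : ContDiff ℝ (⊤ : ℕ∞) U) (hV : ContDiff ℝ (⊤ : ℕ∞) V) (hW : ContDiff ℝ (⊤ : ℕ∞) W)
    (hUU : ∀ t, ⟪U t, U t⟫ = 1) (hVV : ∀ t, ⟪V t, V t⟫ = 1)
    (hWW : ∀ t, ⟪W t, W t⟫ = 1)
    (hUV : ∀ t, ⟪U t, V t⟫ = 0) (hUW : ∀ t, ⟪U t, W t⟫ = 0)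
    (hVW : ∀ t, ⟪V t, W t⟫ = 0)
    (hU' : deriv U 0 = -b • V 0)
    (hV' : deriv V 0 = -a • W 0 + b • U 0)
    (hW' : deriv W 0 = a • V 0)
    (φ : ℝ → ℝ) (hφ : ContDiff ℝ (⊤ : ℕ∞) φ)
    (hφ0 : φ 0 = 0) (hφ'0 : deriv φ 0 = b)
    (hφ''0 : deriv (deriv φ) 0 = ⟪deriv (deriv V) 0, U 0⟫)
    (U₂ V₂ : ℝ → EuclideanSpace ℝ (Fin 3))
    (hU₂ : ∀ t, U₂ t = cos (φ t) • U t + sin (φ t) • V t)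
    (hV₂ : ∀ t, V₂ t = -sin (φ t) • U t + cos (φ t) • V t) :
    deriv U₂ 0 = 0 ∧
    deriv V₂ 0 = -a • W 0 ∧
    ⟪deriv (deriv U₂) 0, V 0⟫ = 0 ∧
    ⟪deriv (deriv V₂) 0, U 0⟫ = 0 := by
  have hUi : ContDiff ℝ ((⊤:ℕ∞) : WithTop ℕ∞) U := hU.of_le (by simp)
  have hVi : ContDiff ℝ ((⊤:ℕ∞) : WithTop ℕ∞) V := hV.of_le (by simp)
  have hφi : ContDiff ℝ ((⊤:ℕ∞) : WithTop ℕ∞) φ := hφ.of_le (by simp)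
  have hUd : Differentiable ℝ U := hU.differentiable (by simp)
  have hVd : Differentiable ℝ V := hV.differentiable (by simp)
  have hφd : Differentiable ℝ φ := hφ.differentiable (by simp)
  have hU'd : Differentiable ℝ (deriv U) :=
    ((contDiff_infty_iff_deriv.mp hUi).2).differentiable (by simp)
  have hV'd : Differentiable ℝ (deriv V) :=
    ((contDiff_infty_iff_deriv.mp hVi).2).differentiable (by simp)
  have hφ'd : Differentiable ℝ (deriv φ) :=
    ((contDiff_infty_iff_deriv.mp hφi).2).differentiable (by simp)
  -- derivative of cos ∘ φ and sin ∘ φ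
  have hc : ∀ t, HasDerivAt (fun t => cos (φ t)) (-sin (φ t) * deriv φ t) t := fun t =>
    (Real.hasDerivAt_cos (φ t)).comp t (hφd t).hasDerivAt
  have hs : ∀ t, HasDerivAt (fun t => sin (φ t)) (cos (φ t) * deriv φ t) t := fun t =>
    (Real.hasDerivAt_sin (φ t)).comp t (hφd t).hasDerivAt
  -- first derivative of U₂, V₂
  have hU₂fun : U₂ = fun t => cos (φ t) • U t + sin (φ t) • V t := funext hU₂
  have hV₂fun : V₂ = fun t => -sin (φ t) • U t + cos (φ t) • V t := funext hV₂
  have hU₂' : ∀ t, HasDerivAt U₂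
      ((cos (φ t) • deriv U t + (-sin (φ t) * deriv φ t) • U t) +
       (sin (φ t) • deriv V t + (cos (φ t) * deriv φ t) • V t)) t := by
    intro t
    rw [hU₂fun]
    exact ((hc t).smul (hUd t).hasDerivAt).add ((hs t).smul (hVd t).hasDerivAt)
  have hV₂' : ∀ t, HasDerivAt V₂
      ((-sin (φ t) • deriv U t + (-(cos (φ t) * deriv φ t)) • U t) +
       (cos (φ t) • deriv V t + (-sin (φ t) * deriv φ t) • V t)) t := by
    intro t
    rw [hV₂fun]
    exact (((hs t).neg).smul (hUd t).hasDerivAt).add ((hc t).smul (hVd t).hasDerivAt)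
  have hdU₂ : deriv U₂ = fun t =>
      (cos (φ t) • deriv U t + (-sin (φ t) * deriv φ t) • U t) +
      (sin (φ t) • deriv V t + (cos (φ t) * deriv φ t) • V t) :=
    funext fun t => (hU₂' t).deriv
  have hdV₂ : deriv V₂ = fun t =>
      (-sin (φ t) • deriv U t + (-(cos (φ t) * deriv φ t)) • U t) +
      (cos (φ t) • deriv V t + (-sin (φ t) * deriv φ t) • V t) :=
    funext fun t => (hV₂' t).deriv
  -- first derivatives at 0
  have h1 : deriv U₂ 0 = 0 := by
    rw [hdU₂]; simp [hφ0, hφ'0, hU']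
  have h2 : deriv V₂ 0 = -a • W 0 := by
    rw [hdV₂]; simp [hφ0, hφ'0, hU', hV']
  -- symmetric orthogonality
  have hVU : ∀ t, ⟪V t, U t⟫ = (0:ℝ) := fun t => by rw [real_inner_comm]; exact hUV t
  have hWU : ∀ t, ⟪W t, U t⟫ = (0:ℝ) := fun t => by rw [real_inner_comm]; exact hUW t
  have hWV : ∀ t, ⟪W t, V t⟫ = (0:ℝ) := fun t => by rw [real_inner_comm]; exact hVW t
  -- differentiated orthogonality relation
  have h3 : ∀ t, ⟪U t, deriv V t⟫ + ⟪deriv U t, V t⟫ = (0:ℝ) := by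
    intro t
    have hd := (HasDerivAt.inner ℝ (hUd t).hasDerivAt (hVd t).hasDerivAt).deriv
    rw [show (fun t => ⟪U t, V t⟫) = fun _ => (0:ℝ) from funext hUV, deriv_const] at hd
    exact hd.symm
  have h4 : (⟪U 0, deriv (deriv V) 0⟫ + ⟪deriv U 0, deriv V 0⟫) +
      (⟪deriv U 0, deriv V 0⟫ + ⟪deriv (deriv U) 0, V 0⟫) = (0:ℝ) := by
    have hg : deriv (fun t => ⟪U t, deriv V t⟫ + ⟪deriv U t, V t⟫) 0 = _ := (HasDerivAt.add
      (HasDerivAt.inner ℝ (hUd 0).hasDerivAt (hV'd 0).hasDerivAt)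
      (HasDerivAt.inner ℝ (hU'd 0).hasDerivAt (hVd 0).hasDerivAt)).deriv
    rw [show (fun t => ⟪U t, deriv V t⟫ + ⟪deriv U t, V t⟫) = fun _ => (0:ℝ) from funext h3,
      deriv_const] at hg
    exact hg.symm
  have hU'V' : ⟪deriv U 0, deriv V 0⟫ = (0:ℝ) := by
    rw [hU', hV', real_inner_smul_left, inner_add_right, real_inner_smul_right,
      real_inner_smul_right, hVW, hVU]
    ring
  have hUV'' : ⟪deriv (deriv U) 0, V 0⟫ = -deriv (deriv φ) 0 := by
    have : ⟪U 0, deriv (deriv V) 0⟫ = deriv (deriv φ) 0 := by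
      rw [hφ''0, real_inner_comm]
    have h4' := h4
    rw [hU'V', this] at h4'
    linarith
  refine ⟨h1, h2, ?_, ?_⟩
  · have hB := ((((hc 0).smul (hU'd 0).hasDerivAt).add
      ((((hs 0).neg).mul (hφ'd 0).hasDerivAt).smul (hUd 0).hasDerivAt)).add
      (((hs 0).smul (hV'd 0).hasDerivAt).add
      (((hc 0).mul (hφ'd 0).hasDerivAt).smul (hVd 0).hasDerivAt)))
    rw [hdU₂]; erw [hB.deriv]
    simp only [hφ0, hφ'0, Real.sin_zero, Real.cos_zero, neg_zero, zero_mul, mul_zero, zero_smul,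
      one_smul, one_mul, mul_one, add_zero, zero_add, inner_add_left, inner_smul_left,
      RCLike.ofReal_real_eq_id, id_eq, hUV'', hVV, hVU, Pi.mul_apply, Pi.neg_apply]
    rw [hV']
    simp [inner_add_left, inner_smul_left, hWV, hUV]
  · have hB := (((((hs 0).neg).smul (hU'd 0).hasDerivAt).add
      ((((hc 0).mul (hφ'd 0).hasDerivAt).neg).smul (hUd 0).hasDerivAt)).add
      (((hc 0).smul (hV'd 0).hasDerivAt).add
      ((((hs 0).neg).mul (hφ'd 0).hasDerivAt).smul (hVd 0).hasDerivAt)))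
    rw [hdV₂]; erw [hB.deriv]
    have hV''U : ⟪deriv (deriv V) 0, U 0⟫ = deriv (deriv φ) 0 := hφ''0.symm
    simp only [hφ0, hφ'0, Real.sin_zero, Real.cos_zero, neg_zero, zero_mul, mul_zero, zero_smul,
      one_smul, one_mul, mul_one, add_zero, zero_add, neg_smul, inner_add_left, inner_neg_left,
      inner_smul_left, RCLike.ofReal_real_eq_id, id_eq, hV''U, hUU, hUV, Pi.mul_apply, Pi.neg_apply]
    rw [hU']
    simp [inner_smul_left, hVU]
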